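/- Let D ⊆ ℝ² be open and let u : D → ℝ be a smooth function with |∂_x u| < 1, |∂_y u| < 1 and 0 < u < π on D, satisfying the hyperbolic Monge–Ampère equation ∂_x∂_y u = √(1 − u_x²)·√(1 − u_y²)/sin(u). Then the functions ξ̂ := u_{xx}/√(1 − u_x²) − √(1 − u_x²)·cot(u) and ξ̌ := u_{yy}/√(1 − u_y²) − √(1 − u_y²)·cot(u) are intermediate integrals: ∂_y ξ̂ = 0 and ∂_x ξ̌ = 0 on D. -/

import Mathlib

noncomputable section

open Real

/-- Partial derivative with respect to the first variable. -/
def pdx (f : ℝ → ℝ → ℝ) (x y : ℝ) : ℝ := deriv (fun t => f t y) x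

/-- Partial derivative with respect to the second variable. -/
def pdy (f : ℝ → ℝ → ℝ) (x y : ℝ) : ℝ := deriv (fun t => f x t) y

namespace So3MAaux

open Topology

def Px (f : ℝ × ℝ → ℝ) (w : ℝ × ℝ) : ℝ := fderiv ℝ f w (1, 0)
def Py (f : ℝ × ℝ → ℝ) (w : ℝ × ℝ) : ℝ := fderiv ℝ f w (0, 1)

lemma hasDerivAt_Px {f : ℝ × ℝ → ℝ} {z : ℝ × ℝ} (hf : DifferentiableAt ℝ f z) :
    HasDerivAt (fun t => f (t, z.2)) (Px f z) z.1 := by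
  have h1 : HasDerivAt (fun t : ℝ => ((t, z.2) : ℝ × ℝ)) ((1 : ℝ), (0 : ℝ)) z.1 :=
    (hasDerivAt_id z.1).prodMk (hasDerivAt_const z.1 z.2)
  simpa [Px, Function.comp_def] using hf.hasFDerivAt.comp_hasDerivAt z.1 h1

lemma hasDerivAt_Py {f : ℝ × ℝ → ℝ} {z : ℝ × ℝ} (hf : DifferentiableAt ℝ f z) :
    HasDerivAt (fun s => f (z.1, s)) (Py f z) z.2 := by
  have h1 : HasDerivAt (fun s : ℝ => ((z.1, s) : ℝ × ℝ)) ((0 : ℝ), (1 : ℝ)) z.2 :=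
    (hasDerivAt_const z.2 z.1).prodMk (hasDerivAt_id z.2)
  simpa [Py, Function.comp_def] using hf.hasFDerivAt.comp_hasDerivAt z.2 h1

lemma contDiffAt_Px {f : ℝ × ℝ → ℝ} {z : ℝ × ℝ} (hf : ContDiffAt ℝ (⊤ : ℕ∞) f z) :
    ContDiffAt ℝ (⊤ : ℕ∞) (Px f) z :=
  (hf.fderiv_right (by simp)).clm_apply contDiffAt_const

lemma contDiffAt_Py {f : ℝ × ℝ → ℝ} {z : ℝ × ℝ} (hf : ContDiffAt ℝ (⊤ : ℕ∞) f z) :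
    ContDiffAt ℝ (⊤ : ℕ∞) (Py f) z :=
  (hf.fderiv_right (by simp)).clm_apply contDiffAt_const

lemma diffAt_Px {f : ℝ × ℝ → ℝ} {z : ℝ × ℝ} (hf : ContDiffAt ℝ (⊤ : ℕ∞) f z) :
    DifferentiableAt ℝ (Px f) z :=
  (contDiffAt_Px hf).differentiableAt (by simp)

lemma diffAt_Py {f : ℝ × ℝ → ℝ} {z : ℝ × ℝ} (hf : ContDiffAt ℝ (⊤ : ℕ∞) f z) :
    DifferentiableAt ℝ (Py f) z :=
  (contDiffAt_Py hf).differentiableAt (by simp)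

lemma fderiv_Px {f : ℝ × ℝ → ℝ} {z : ℝ × ℝ} (hf : ContDiffAt ℝ (⊤ : ℕ∞) f z) (v : ℝ × ℝ) :
    fderiv ℝ (Px f) z v = fderiv ℝ (fderiv ℝ f) z v (1, 0) := by
  have hd : DifferentiableAt ℝ (fderiv ℝ f) z :=
    (hf.fderiv_right (m := (⊤ : ℕ∞)) (by simp)).differentiableAt (by simp)
  have : fderiv ℝ (fun w => (fderiv ℝ f w) ((1 : ℝ), (0 : ℝ))) z
      = ((fderiv ℝ f z).comp (fderiv ℝ (fun _ => ((1:ℝ),(0:ℝ))) z))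
        + (fderiv ℝ (fderiv ℝ f) z).flip ((1:ℝ),(0:ℝ)) :=
    fderiv_clm_apply hd (differentiableAt_const _)
  show fderiv ℝ (fun w => (fderiv ℝ f w) ((1 : ℝ), (0 : ℝ))) z v = _
  rw [this]
  simp

lemma fderiv_Py {f : ℝ × ℝ → ℝ} {z : ℝ × ℝ} (hf : ContDiffAt ℝ (⊤ : ℕ∞) f z) (v : ℝ × ℝ) :
    fderiv ℝ (Py f) z v = fderiv ℝ (fderiv ℝ f) z v (0, 1) := by
  have hd : DifferentiableAt ℝ (fderiv ℝ f) z :=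
    (hf.fderiv_right (m := (⊤ : ℕ∞)) (by simp)).differentiableAt (by simp)
  have : fderiv ℝ (fun w => (fderiv ℝ f w) ((0 : ℝ), (1 : ℝ))) z
      = ((fderiv ℝ f z).comp (fderiv ℝ (fun _ => ((0:ℝ),(1:ℝ))) z))
        + (fderiv ℝ (fderiv ℝ f) z).flip ((0:ℝ),(1:ℝ)) :=
    fderiv_clm_apply hd (differentiableAt_const _)
  show fderiv ℝ (fun w => (fderiv ℝ f w) ((0 : ℝ), (1 : ℝ))) z v = _
  rw [this]
  simp

lemma PyPx_eq_PxPy {f : ℝ × ℝ → ℝ} {z : ℝ × ℝ} (hf : ContDiffAt ℝ (⊤ : ℕ∞) f z) :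
    Py (Px f) z = Px (Py f) z := by
  have hs := hf.isSymmSndFDerivAt (by rw [minSmoothness_of_isRCLikeNormedField]; exact WithTop.coe_le_coe.mpr (le_top : (2 : ℕ∞) ≤ ⊤))
  show fderiv ℝ (Px f) z (0, 1) = fderiv ℝ (Py f) z (1, 0)
  rw [fderiv_Px hf, fderiv_Py hf, hs]

lemma pdx_eq {g : ℝ → ℝ → ℝ} {G : ℝ × ℝ → ℝ} {z : ℝ × ℝ}
    (hev : ∀ᶠ w in 𝓝 z, g w.1 w.2 = G w) (hG : DifferentiableAt ℝ G z) :
    pdx g z.1 z.2 = Px G z := by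
  have hc : ContinuousAt (fun t : ℝ => ((t, z.2) : ℝ × ℝ)) z.1 :=
    (continuous_id.prodMk continuous_const).continuousAt
  have h1 : (fun t => g t z.2) =ᶠ[𝓝 z.1] fun t => G (t, z.2) := hc.eventually hev
  rw [pdx, h1.deriv_eq]
  exact (hasDerivAt_Px hG).deriv

lemma pdy_eq {g : ℝ → ℝ → ℝ} {G : ℝ × ℝ → ℝ} {z : ℝ × ℝ}
    (hev : ∀ᶠ w in 𝓝 z, g w.1 w.2 = G w) (hG : DifferentiableAt ℝ G z) :
    pdy g z.1 z.2 = Py G z := by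
  have hc : ContinuousAt (fun s : ℝ => ((z.1, s) : ℝ × ℝ)) z.2 :=
    (continuous_const.prodMk continuous_id).continuousAt
  have h1 : (fun s => g z.1 s) =ᶠ[𝓝 z.2] fun s => G (z.1, s) := hc.eventually hev
  rw [pdy, h1.deriv_eq]
  exact (hasDerivAt_Py hG).deriv


lemma hasDerivAt_Px' {f : ℝ × ℝ → ℝ} {a b : ℝ} (hf : DifferentiableAt ℝ f (a, b)) :
    HasDerivAt (fun t => f (t, b)) (Px f (a, b)) a := hasDerivAt_Px hf

lemma hasDerivAt_Py' {f : ℝ × ℝ → ℝ} {a b : ℝ} (hf : DifferentiableAt ℝ f (a, b)) :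
    HasDerivAt (fun s => f (a, s)) (Py f (a, b)) b := hasDerivAt_Py hf

lemma pdx_eq' {g : ℝ → ℝ → ℝ} {G : ℝ × ℝ → ℝ} {a b : ℝ}
    (hev : ∀ᶠ w in 𝓝 ((a, b) : ℝ × ℝ), g w.1 w.2 = G w)
    (hG : DifferentiableAt ℝ G (a, b)) : pdx g a b = Px G (a, b) := pdx_eq hev hG

lemma pdy_eq' {g : ℝ → ℝ → ℝ} {G : ℝ × ℝ → ℝ} {a b : ℝ}
    (hev : ∀ᶠ w in 𝓝 ((a, b) : ℝ × ℝ), g w.1 w.2 = G w)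
    (hG : DifferentiableAt ℝ G (a, b)) : pdy g a b = Py G (a, b) := pdy_eq hev hG

lemma mixed (D : Set (ℝ × ℝ)) (hD : IsOpen D) (u : ℝ → ℝ → ℝ)
    (hu : ContDiffOn ℝ (⊤ : ℕ∞) (fun p : ℝ × ℝ => u p.1 p.2) D) :
    ∀ a b : ℝ, ((a, b) : ℝ × ℝ) ∈ D → pdy (pdx u) a b = pdx (pdy u) a b := by
  have hf : ∀ w ∈ D, ContDiffAt ℝ (⊤ : ℕ∞) (fun p : ℝ × ℝ => u p.1 p.2) w := fun w hw => hu.contDiffAt (hD.mem_nhds hw)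
  have e_px : ∀ c d : ℝ, ((c, d) : ℝ × ℝ) ∈ D → pdx u c d = Px (fun p : ℝ × ℝ => u p.1 p.2) (c, d) :=
    fun c d h' => pdx_eq' (Filter.Eventually.of_forall fun _ => rfl)
      ((hf _ h').differentiableAt (by simp))
  have e_py : ∀ c d : ℝ, ((c, d) : ℝ × ℝ) ∈ D → pdy u c d = Py (fun p : ℝ × ℝ => u p.1 p.2) (c, d) :=
    fun c d h' => pdy_eq' (Filter.Eventually.of_forall fun _ => rfl)
      ((hf _ h').differentiableAt (by simp))
  intro a b h
  have h1 : pdy (pdx u) a b = Py (Px (fun p : ℝ × ℝ => u p.1 p.2)) (a, b) := by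
    refine pdy_eq' ?_ (diffAt_Px (hf _ h))
    filter_upwards [hD.eventually_mem h] with w hw
    exact e_px w.1 w.2 hw
  have h2 : pdx (pdy u) a b = Px (Py (fun p : ℝ × ℝ => u p.1 p.2)) (a, b) := by
    refine pdx_eq' ?_ (diffAt_Py (hf _ h))
    filter_upwards [hD.eventually_mem h] with w hw
    exact e_py w.1 w.2 hw
  rw [h1, h2, PyPx_eq_PxPy (hf _ h)]

lemma key (D : Set (ℝ × ℝ)) (hD : IsOpen D) (u : ℝ → ℝ → ℝ)
    (hu : ContDiffOn ℝ (⊤ : ℕ∞) (fun p : ℝ × ℝ => u p.1 p.2) D)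
    (hux : ∀ p ∈ D, |pdx u p.1 p.2| < 1) (huy : ∀ p ∈ D, |pdy u p.1 p.2| < 1)
    (hu0 : ∀ p ∈ D, 0 < u p.1 p.2) (huπ : ∀ p ∈ D, u p.1 p.2 < Real.pi)
    (heq : ∀ p ∈ D, pdx (pdy u) p.1 p.2
        = Real.sqrt (1 - (pdx u p.1 p.2) ^ 2) * Real.sqrt (1 - (pdy u p.1 p.2) ^ 2)
            / Real.sin (u p.1 p.2)) :
    ∀ p ∈ D, pdy (fun x y =>
        pdx (pdx u) x y / Real.sqrt (1 - (pdx u x y) ^ 2)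
          - Real.sqrt (1 - (pdx u x y) ^ 2) * (Real.cos (u x y) / Real.sin (u x y)))
        p.1 p.2 = 0 := by
  have hf : ∀ w ∈ D, ContDiffAt ℝ (⊤ : ℕ∞) (fun p : ℝ × ℝ => u p.1 p.2) w := fun w hw => hu.contDiffAt (hD.mem_nhds hw)
  have e_px : ∀ a b : ℝ, ((a, b) : ℝ × ℝ) ∈ D → pdx u a b = Px (fun p : ℝ × ℝ => u p.1 p.2) (a, b) :=
    fun a b h => pdx_eq' (Filter.Eventually.of_forall fun _ => rfl)
      ((hf _ h).differentiableAt (by simp))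
  have e_py : ∀ a b : ℝ, ((a, b) : ℝ × ℝ) ∈ D → pdy u a b = Py (fun p : ℝ × ℝ => u p.1 p.2) (a, b) :=
    fun a b h => pdy_eq' (Filter.Eventually.of_forall fun _ => rfl)
      ((hf _ h).differentiableAt (by simp))
  have e_pxx : ∀ a b : ℝ, ((a, b) : ℝ × ℝ) ∈ D → pdx (pdx u) a b = Px (Px (fun p : ℝ × ℝ => u p.1 p.2)) (a, b) := by
    intro a b h
    refine pdx_eq' ?_ (diffAt_Px (hf _ h))
    filter_upwards [hD.eventually_mem h] with w hw
    exact e_px w.1 w.2 hw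
  have e_pyx : ∀ a b : ℝ, ((a, b) : ℝ × ℝ) ∈ D → pdx (pdy u) a b = Px (Py (fun p : ℝ × ℝ => u p.1 p.2)) (a, b) := by
    intro a b h
    refine pdx_eq' ?_ (diffAt_Py (hf _ h))
    filter_upwards [hD.eventually_mem h] with w hw
    exact e_py w.1 w.2 hw
  -- the PDE in terms of jets
  have hS : ∀ a b : ℝ, ((a, b) : ℝ × ℝ) ∈ D → Py (Px (fun p : ℝ × ℝ => u p.1 p.2)) (a, b)
      = Real.sqrt (1 - (Px (fun p : ℝ × ℝ => u p.1 p.2) (a, b)) ^ 2) * Real.sqrt (1 - (Py (fun p : ℝ × ℝ => u p.1 p.2) (a, b)) ^ 2)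
          / Real.sin (u a b) := by
    intro a b h
    rw [PyPx_eq_PxPy (hf _ h), ← e_pyx a b h, ← e_px a b h, ← e_py a b h]
    exact heq (a, b) h
  rintro ⟨x, y⟩ hz
  show pdy _ x y = 0
  -- positivity at the point
  have ha : 0 < 1 - (Px (fun p : ℝ × ℝ => u p.1 p.2) (x, y)) ^ 2 := by
    have h := hux (x, y) hz
    rw [show pdx u (x, y).1 (x, y).2 = pdx u x y from rfl, e_px x y hz] at h
    have h2 := abs_lt.mp h
    nlinarith [h2.1, h2.2]
  have hb : 0 < 1 - (Py (fun p : ℝ × ℝ => u p.1 p.2) (x, y)) ^ 2 := by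
    have h := huy (x, y) hz
    rw [show pdy u (x, y).1 (x, y).2 = pdy u x y from rfl, e_py x y hz] at h
    have h2 := abs_lt.mp h
    nlinarith [h2.1, h2.2]
  have hsin : 0 < Real.sin (u x y) :=
    Real.sin_pos_of_pos_of_lt_pi (hu0 (x, y) hz) (huπ (x, y) hz)
  have hane : 1 - (Px (fun p : ℝ × ℝ => u p.1 p.2) (x, y)) ^ 2 ≠ 0 := ne_of_gt ha
  have hbne : 1 - (Py (fun p : ℝ × ℝ => u p.1 p.2) (x, y)) ^ 2 ≠ 0 := ne_of_gt hb
  have hsne : Real.sin (u x y) ≠ 0 := ne_of_gt hsin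
  have hsqa : (0 : ℝ) < Real.sqrt (1 - (Px (fun p : ℝ × ℝ => u p.1 p.2) (x, y)) ^ 2) := Real.sqrt_pos.mpr ha
  have hsqb : (0 : ℝ) < Real.sqrt (1 - (Py (fun p : ℝ × ℝ => u p.1 p.2) (x, y)) ^ 2) := Real.sqrt_pos.mpr hb
  have hsqane : Real.sqrt (1 - (Px (fun p : ℝ × ℝ => u p.1 p.2) (x, y)) ^ 2) ≠ 0 := ne_of_gt hsqa
  -- smoothness instances at the point
  have hfz : ContDiffAt ℝ (⊤ : ℕ∞) (fun p : ℝ × ℝ => u p.1 p.2) (x, y) := hf _ hz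
  -- horizontal slice derivatives at x
  have hPt : HasDerivAt (fun t => Px (fun p : ℝ × ℝ => u p.1 p.2) (t, y)) (Px (Px (fun p : ℝ × ℝ => u p.1 p.2)) (x, y)) x :=
    hasDerivAt_Px' (diffAt_Px hfz)
  have hQt : HasDerivAt (fun t => Py (fun p : ℝ × ℝ => u p.1 p.2) (t, y)) (Py (Px (fun p : ℝ × ℝ => u p.1 p.2)) (x, y)) x := by
    have h0 : HasDerivAt (fun t => Py (fun p : ℝ × ℝ => u p.1 p.2) (t, y)) (Px (Py (fun p : ℝ × ℝ => u p.1 p.2)) (x, y)) x :=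
      hasDerivAt_Px' (diffAt_Py hfz)
    rwa [← PyPx_eq_PxPy hfz] at h0
  have hft : HasDerivAt (fun t => u t y) (Px (fun p : ℝ × ℝ => u p.1 p.2) (x, y)) x :=
    hasDerivAt_Px' (hfz.differentiableAt (by simp))
  have hsq1t : HasDerivAt (fun t => Real.sqrt (1 - (Px (fun p : ℝ × ℝ => u p.1 p.2) (t, y)) ^ 2))
      ((0 - 2 * Px (fun p : ℝ × ℝ => u p.1 p.2) (x, y) ^ 1 * Px (Px (fun p : ℝ × ℝ => u p.1 p.2)) (x, y))
        / (2 * Real.sqrt (1 - (Px (fun p : ℝ × ℝ => u p.1 p.2) (x, y)) ^ 2))) x :=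
    ((hasDerivAt_const x (1 : ℝ)).sub (hPt.pow 2)).sqrt hane
  have hsq2t : HasDerivAt (fun t => Real.sqrt (1 - (Py (fun p : ℝ × ℝ => u p.1 p.2) (t, y)) ^ 2))
      ((0 - 2 * Py (fun p : ℝ × ℝ => u p.1 p.2) (x, y) ^ 1 * Py (Px (fun p : ℝ × ℝ => u p.1 p.2)) (x, y))
        / (2 * Real.sqrt (1 - (Py (fun p : ℝ × ℝ => u p.1 p.2) (x, y)) ^ 2))) x :=
    ((hasDerivAt_const x (1 : ℝ)).sub (hQt.pow 2)).sqrt hbne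
  have hlineS := (hsq1t.mul hsq2t).div hft.sin hsne
  have hevx : ∀ᶠ t in 𝓝 x, ((t, y) : ℝ × ℝ) ∈ D := by
    have hc : ContinuousAt (fun t : ℝ => ((t, y) : ℝ × ℝ)) x :=
      (continuous_id.prodMk continuous_const).continuousAt
    exact hc.preimage_mem_nhds (hD.mem_nhds hz)
  have hSsliceF : HasDerivAt (fun t => Py (Px (fun p : ℝ × ℝ => u p.1 p.2)) (t, y)) _ x :=
    hlineS.congr_of_eventuallyEq (by filter_upwards [hevx] with t ht; exact hS t y ht)
  have hSsliceP : HasDerivAt (fun t => Py (Px (fun p : ℝ × ℝ => u p.1 p.2)) (t, y)) (Px (Py (Px (fun p : ℝ × ℝ => u p.1 p.2))) (x, y)) x :=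
    hasDerivAt_Px' (diffAt_Py (contDiffAt_Px hfz))
  have hDRval := hSsliceP.unique hSsliceF
  have h3rd : Py (Px (Px (fun p : ℝ × ℝ => u p.1 p.2))) (x, y) = Px (Py (Px (fun p : ℝ × ℝ => u p.1 p.2))) (x, y) :=
    PyPx_eq_PxPy (contDiffAt_Px hfz)
  -- vertical slice derivatives at y
  have hPs : HasDerivAt (fun s => Px (fun p : ℝ × ℝ => u p.1 p.2) (x, s)) (Py (Px (fun p : ℝ × ℝ => u p.1 p.2)) (x, y)) y :=
    hasDerivAt_Py' (diffAt_Px hfz)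
  have hRs : HasDerivAt (fun s => Px (Px (fun p : ℝ × ℝ => u p.1 p.2)) (x, s)) (Py (Px (Px (fun p : ℝ × ℝ => u p.1 p.2))) (x, y)) y :=
    hasDerivAt_Py' (diffAt_Px (contDiffAt_Px hfz))
  have hfs : HasDerivAt (fun s => u x s) (Py (fun p : ℝ × ℝ => u p.1 p.2) (x, y)) y :=
    hasDerivAt_Py' (hfz.differentiableAt (by simp))
  have hsqv : HasDerivAt (fun s => Real.sqrt (1 - (Px (fun p : ℝ × ℝ => u p.1 p.2) (x, s)) ^ 2))
      ((0 - 2 * Px (fun p : ℝ × ℝ => u p.1 p.2) (x, y) ^ 1 * Py (Px (fun p : ℝ × ℝ => u p.1 p.2)) (x, y))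
        / (2 * Real.sqrt (1 - (Px (fun p : ℝ × ℝ => u p.1 p.2) (x, y)) ^ 2))) y :=
    ((hasDerivAt_const y (1 : ℝ)).sub (hPs.pow 2)).sqrt hane
  have hTT := (hRs.div hsqv hsqane).sub (hsqv.mul ((hfs.cos).div hfs.sin hsne))
  have hevy : ∀ᶠ s in 𝓝 y, ((x, s) : ℝ × ℝ) ∈ D := by
    have hc : ContinuousAt (fun s : ℝ => ((x, s) : ℝ × ℝ)) y :=
      (continuous_const.prodMk continuous_id).continuousAt
    exact hc.preimage_mem_nhds (hD.mem_nhds hz)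
  have hev2 : (fun s => pdx (pdx u) x s / Real.sqrt (1 - (pdx u x s) ^ 2)
        - Real.sqrt (1 - (pdx u x s) ^ 2) * (Real.cos (u x s) / Real.sin (u x s)))
      =ᶠ[𝓝 y] (fun s => Px (Px (fun p : ℝ × ℝ => u p.1 p.2)) (x, s) / Real.sqrt (1 - (Px (fun p : ℝ × ℝ => u p.1 p.2) (x, s)) ^ 2)
        - Real.sqrt (1 - (Px (fun p : ℝ × ℝ => u p.1 p.2) (x, s)) ^ 2) * (Real.cos (u x s) / Real.sin (u x s))) := by
    filter_upwards [hevy] with s hs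
    rw [e_pxx x s hs, e_px x s hs]
  show deriv (fun s => pdx (pdx u) x s / Real.sqrt (1 - (pdx u x s) ^ 2)
      - Real.sqrt (1 - (pdx u x s) ^ 2) * (Real.cos (u x s) / Real.sin (u x s))) y = 0
  have hTTd : deriv (fun s => Px (Px (fun p : ℝ × ℝ => u p.1 p.2)) (x, s) / Real.sqrt (1 - (Px (fun p : ℝ × ℝ => u p.1 p.2) (x, s)) ^ 2) - Real.sqrt (1 - (Px (fun p : ℝ × ℝ => u p.1 p.2) (x, s)) ^ 2) * (Real.cos (u x s) / Real.sin (u x s))) y = _ := hTT.deriv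
  rw [hev2.deriv_eq, hTTd, h3rd, hDRval, hS x y hz]
  simp only [Pi.mul_apply, Pi.div_apply]
  set Pz := Px (fun p : ℝ × ℝ => u p.1 p.2) (x, y) with hPz
  set Qz := Py (fun p : ℝ × ℝ => u p.1 p.2) (x, y) with hQz
  set Rz := Px (Px (fun p : ℝ × ℝ => u p.1 p.2)) (x, y) with hRz
  set A := Real.sqrt (1 - Pz ^ 2) with hA
  set B := Real.sqrt (1 - Qz ^ 2) with hB
  set sz := Real.sin (u x y) with hsz
  set cz := Real.cos (u x y) with hcz
  have hA2 : A ^ 2 = 1 - Pz ^ 2 := Real.sq_sqrt ha.le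
  have hB2 : B ^ 2 = 1 - Qz ^ 2 := Real.sq_sqrt hb.le
  have hsc : sz ^ 2 + cz ^ 2 = 1 := Real.sin_sq_add_cos_sq (u x y)
  field_simp
  linear_combination (2 * A ^ 4 * B * Qz) * hsc

end So3MAaux

end

/-- Intermediate integrals of the Darboux integrable Monge–Ampère equation
`u_{xy} = √(1 − uₓ²)√(1 − uᵧ²)/sin u` (whose Vessiot algebra is `so(3,ℝ)`): for a smooth
solution `u` with `|uₓ| < 1`, `|uᵧ| < 1` and `0 < u < π`, the functions
`ξ̂ = uₓₓ/√(1 − uₓ²) − √(1 − uₓ²)·cot u` and `ξ̌ = uᵧᵧ/√(1 − uᵧ²) − √(1 − uᵧ²)·cot u`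
satisfy `∂ᵧ ξ̂ = 0` and `∂ₓ ξ̌ = 0`. -/
theorem so3_MA_intermediate_integrals (D : Set (ℝ × ℝ)) (hD : IsOpen D)
    (u : ℝ → ℝ → ℝ)
    (hu : ContDiffOn ℝ (⊤ : ℕ∞) (fun p : ℝ × ℝ => u p.1 p.2) D)
    (hux : ∀ p ∈ D, |pdx u p.1 p.2| < 1) (huy : ∀ p ∈ D, |pdy u p.1 p.2| < 1)
    (hu0 : ∀ p ∈ D, 0 < u p.1 p.2) (huπ : ∀ p ∈ D, u p.1 p.2 < Real.pi)
    (heq : ∀ p ∈ D, pdx (pdy u) p.1 p.2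
        = Real.sqrt (1 - (pdx u p.1 p.2) ^ 2) * Real.sqrt (1 - (pdy u p.1 p.2) ^ 2)
            / Real.sin (u p.1 p.2)) :
    (∀ p ∈ D, pdy (fun x y =>
        pdx (pdx u) x y / Real.sqrt (1 - (pdx u x y) ^ 2)
          - Real.sqrt (1 - (pdx u x y) ^ 2) * (Real.cos (u x y) / Real.sin (u x y)))
        p.1 p.2 = 0) ∧
    (∀ p ∈ D, pdx (fun x y =>
        pdy (pdy u) x y / Real.sqrt (1 - (pdy u x y) ^ 2)
          - Real.sqrt (1 - (pdy u x y) ^ 2) * (Real.cos (u x y) / Real.sin (u x y)))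
        p.1 p.2 = 0) := by
  constructor
  · exact So3MAaux.key D hD u hu hux huy hu0 huπ heq
  · -- apply `key` to the reflected function `v x y = u y x` on the reflected domain
    set v : ℝ → ℝ → ℝ := fun a b => u b a with hv
    set D' : Set (ℝ × ℝ) := Prod.swap ⁻¹' D with hD'
    have hD'open : IsOpen D' := hD.preimage continuous_swap
    have hswap : ContDiffOn ℝ (⊤ : ℕ∞) (fun p : ℝ × ℝ => v p.1 p.2) D' := by
      have h1 : (fun p : ℝ × ℝ => v p.1 p.2)
          = (fun p : ℝ × ℝ => u p.1 p.2) ∘ Prod.swap := rfl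
      rw [h1]
      exact hu.comp (contDiff_snd.prodMk contDiff_fst).contDiffOn (fun w hw => hw)
    have hmem : ∀ q : ℝ × ℝ, q ∈ D' → ((q.2, q.1) : ℝ × ℝ) ∈ D := fun q hq => hq
    have hux' : ∀ q ∈ D', |pdx v q.1 q.2| < 1 := fun q hq => huy (q.2, q.1) (hmem q hq)
    have huy' : ∀ q ∈ D', |pdy v q.1 q.2| < 1 := fun q hq => hux (q.2, q.1) (hmem q hq)
    have hu0' : ∀ q ∈ D', 0 < v q.1 q.2 := fun q hq => hu0 (q.2, q.1) (hmem q hq)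
    have huπ' : ∀ q ∈ D', v q.1 q.2 < Real.pi := fun q hq => huπ (q.2, q.1) (hmem q hq)
    have heq' : ∀ q ∈ D', pdx (pdy v) q.1 q.2
        = Real.sqrt (1 - (pdx v q.1 q.2) ^ 2) * Real.sqrt (1 - (pdy v q.1 q.2) ^ 2)
            / Real.sin (v q.1 q.2) := by
      intro q hq
      have h1 : pdx (pdy v) q.1 q.2 = pdy (pdx u) q.2 q.1 := rfl
      have h2 := So3MAaux.mixed D hD u hu q.2 q.1 (hmem q hq)
      have h3 := heq (q.2, q.1) (hmem q hq)
      rw [h1, h2]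
      rw [show pdx (pdy u) ((q.2, q.1) : ℝ × ℝ).1 ((q.2, q.1) : ℝ × ℝ).2
          = pdx (pdy u) q.2 q.1 from rfl] at h3
      rw [h3]
      rw [show pdx u ((q.2, q.1) : ℝ × ℝ).1 ((q.2, q.1) : ℝ × ℝ).2 = pdy v q.1 q.2 from rfl,
        show pdy u ((q.2, q.1) : ℝ × ℝ).1 ((q.2, q.1) : ℝ × ℝ).2 = pdx v q.1 q.2 from rfl,
        show u ((q.2, q.1) : ℝ × ℝ).1 ((q.2, q.1) : ℝ × ℝ).2 = v q.1 q.2 from rfl]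
      ring
    intro p hp
    have hp' : ((p.2, p.1) : ℝ × ℝ) ∈ D' := hp
    have h := So3MAaux.key D' hD'open v hswap hux' huy' hu0' huπ' heq' (p.2, p.1) hp'
    exact h
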